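/- Let (\lambda_n) be positive, \Lambda_n = \sum_{i=1}^n \lambda_i. For any M > 0, non-negative (a_n), and N \ge 1: \sum_{n=1}^N \Lambda_n (e^{M\lambda_n/\Lambda_n}/\lambda_n - 1/\lambda_{n+1}) G_n \le e^M \sum_{n=1}^N a_n, where G_n = \prod_{k=1}^n a_k^{\lambda_k/\Lambda_n}. -/

import Mathlib

/-!
Put `P n = ∑_{j ≤ n} λ_j / Λ_j` and `c k = exp (M (1 + P (k - 1)))`. Since
`∑_{k ≤ n} λ_k (1 + P (k - 1)) = Λ_n P n`, the `λ`-weighted geometric mean of `c` over `1, …, n`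
is `exp (M P n)`, so `R n := Λ_n · (weighted geometric mean of c·a) = Λ_n G_n exp (M P n)`, and the
`n`-th summand is `(T n - T (n + 1)) R n` with `T n = exp (-M P (n - 1)) / λ_n`. Weighted AM-GM
gives `R n ≤ R (n - 1) + λ_n c_n a_n`, and summation by parts with `T n λ_n c_n = e^M` bounds the
sum by `e^M ∑ a_n`.
-/

open Finset Real

section WeightedGeomMean

variable {ι : Type*} (w : ι → ℝ)

noncomputable def weightedGeomMean (x : ι → ℝ) (s : Finset ι) : ℝ :=
  ∏ k ∈ s, x k ^ (w k / ∑ j ∈ s, w j)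

variable {w}

lemma weightedGeomMean_nonneg {x : ι → ℝ} {s : Finset ι} (hx : ∀ k ∈ s, 0 ≤ x k) :
    0 ≤ weightedGeomMean w x s :=
  prod_nonneg fun k hk => rpow_nonneg (hx k hk) _

lemma weightedGeomMean_mul {x y : ι → ℝ} {s : Finset ι} (hx : ∀ k ∈ s, 0 ≤ x k)
    (hy : ∀ k ∈ s, 0 ≤ y k) :
    weightedGeomMean w (fun k => x k * y k) s =
      weightedGeomMean w x s * weightedGeomMean w y s := by
  rw [weightedGeomMean, weightedGeomMean, weightedGeomMean, ← prod_mul_distrib]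
  exact prod_congr rfl fun k hk => mul_rpow (hx k hk) (hy k hk)

lemma weightedGeomMean_exp (f : ι → ℝ) (s : Finset ι) :
    weightedGeomMean w (fun k => exp (f k)) s = exp ((∑ k ∈ s, w k * f k) / ∑ k ∈ s, w k) := by
  rw [weightedGeomMean, sum_div, exp_sum]
  exact prod_congr rfl fun k _ => by rw [← exp_mul]; ring_nf

lemma sum_mul_weightedGeomMean_insert_le [DecidableEq ι] {x : ι → ℝ} {s : Finset ι} {i : ι}
    (hi : i ∉ s) (hw : ∀ k ∈ insert i s, 0 < w k) (hx : ∀ k ∈ insert i s, 0 ≤ x k) :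
    (∑ k ∈ insert i s, w k) * weightedGeomMean w x (insert i s) ≤
      (∑ k ∈ s, w k) * weightedGeomMean w x s + w i * x i := by
  set A := ∑ k ∈ s, w k with hA_def
  have hwi : 0 < w i := hw i (mem_insert_self i s)
  have hA : 0 ≤ A := sum_nonneg fun k hk => (hw k (mem_insert_of_mem hk)).le
  have hB : 0 < A + w i := by positivity
  have hxs : ∀ k ∈ s, 0 ≤ x k := fun k hk => hx k (mem_insert_of_mem hk)
  have hxi : 0 ≤ x i := hx i (mem_insert_self i s)
  have hsplit : weightedGeomMean w x (insert i s) =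
      weightedGeomMean w x s ^ (A / (A + w i)) * x i ^ (w i / (A + w i)) := by
    rw [weightedGeomMean, weightedGeomMean, sum_insert hi, prod_insert hi, mul_comm, add_comm (w i),
      ← hA_def, ← finsetProd_rpow _ _ fun k hk => rpow_nonneg (hxs k hk) _]
    congr 1
    refine prod_congr rfl fun k hk => ?_
    have hA' : 0 < A := (hw k (mem_insert_of_mem hk)).trans_le
      (single_le_sum (fun j hj => (hw j (mem_insert_of_mem hj)).le) hk)
    rw [← rpow_mul (hxs k hk)]
    congr 1
    field_simp
  have hamgm := geom_mean_le_arith_mean2_weighted (div_nonneg hA hB.le)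
    (div_nonneg hwi.le hB.le) (weightedGeomMean_nonneg (w := w) hxs) hxi
    (by rw [← add_div, div_self hB.ne'])
  rw [sum_insert hi, add_comm (w i), ← hA_def, hsplit]
  calc (A + w i) * (weightedGeomMean w x s ^ (A / (A + w i)) * x i ^ (w i / (A + w i)))
      ≤ (A + w i) * (A / (A + w i) * weightedGeomMean w x s + w i / (A + w i) * x i) :=
        mul_le_mul_of_nonneg_left hamgm hB.le
    _ = A * weightedGeomMean w x s + w i * x i := by field_simp

end WeightedGeomMean

lemma sum_Icc_sub_mul_add_le_sum_mul {T R d : ℕ → ℝ} (hR₀ : R 0 = 0) (hT : ∀ n, 0 ≤ T (n + 1))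
    (hR : ∀ n, R (n + 1) ≤ R n + d (n + 1)) (N : ℕ) :
    ∑ n ∈ Icc 1 N, (T n - T (n + 1)) * R n + T (N + 1) * R N ≤ ∑ n ∈ Icc 1 N, T n * d n := by
  induction N with
  | zero => simp [hR₀]
  | succ N ih =>
    rw [sum_Icc_succ_top (by omega), sum_Icc_succ_top (by omega)]
    nlinarith [mul_le_mul_of_nonneg_left (hR N) (hT N)]

namespace WeightedCarleman

variable (lam : ℕ → ℝ) (M : ℝ) (a : ℕ → ℝ)

noncomputable def Lam (n : ℕ) : ℝ := ∑ i ∈ Icc 1 n, lam i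

noncomputable def P (n : ℕ) : ℝ := ∑ j ∈ Icc 1 n, lam j / Lam lam j

noncomputable def c (k : ℕ) : ℝ := exp (M * (1 + P lam (k - 1)))

noncomputable def T (n : ℕ) : ℝ := exp (-(M * P lam (n - 1))) / lam n

noncomputable def R (n : ℕ) : ℝ :=
  Lam lam n * weightedGeomMean lam (fun k => c lam M k * a k) (Icc 1 n)

@[simp] lemma Lam_zero : Lam lam 0 = 0 := by simp [Lam]

lemma Lam_succ (n : ℕ) : Lam lam (n + 1) = Lam lam n + lam (n + 1) :=
  sum_Icc_succ_top (by omega) _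

lemma P_succ (n : ℕ) : P lam (n + 1) = P lam n + lam (n + 1) / Lam lam (n + 1) :=
  sum_Icc_succ_top (by omega) _

variable {lam}

lemma Lam_pos (hlam : ∀ n, 0 < lam n) {n : ℕ} (hn : n ≠ 0) : 0 < Lam lam n :=
  sum_pos (fun i _ => hlam i) ⟨1, by simp; omega⟩

lemma T_pos (hlam : ∀ n, 0 < lam n) (n : ℕ) : 0 < T lam M n :=
  div_pos (exp_pos _) (hlam n)

lemma sum_mul_one_add_P (hlam : ∀ n, 0 < lam n) (n : ℕ) :
    ∑ k ∈ Icc 1 n, lam k * (1 + P lam (k - 1)) = Lam lam n * P lam n := by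
  induction n with
  | zero => simp
  | succ n ih =>
    have hL : Lam lam n + lam (n + 1) ≠ 0 := Lam_succ lam n ▸ (Lam_pos hlam n.succ_ne_zero).ne'
    rw [sum_Icc_succ_top (by omega), ih, P_succ, Nat.add_sub_cancel, Lam_succ]
    field_simp
    ring

lemma weightedGeomMean_c (hlam : ∀ n, 0 < lam n) (n : ℕ) :
    weightedGeomMean lam (c lam M) (Icc 1 n) = exp (M * P lam n) := by
  rcases Nat.eq_zero_or_pos n with rfl | hn
  · simp [weightedGeomMean, P]
  unfold c
  rw [weightedGeomMean_exp]
  have := (Lam_pos hlam hn.ne').ne'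
  simp_rw [mul_left_comm (lam _) M, ← mul_sum, sum_mul_one_add_P hlam]
  change exp (_ / Lam lam n) = _
  field_simp

lemma R_eq (hlam : ∀ n, 0 < lam n) (ha : ∀ n, 0 ≤ a n) (n : ℕ) :
    R lam M a n = Lam lam n * weightedGeomMean lam a (Icc 1 n) * exp (M * P lam n) := by
  rw [R, weightedGeomMean_mul (x := c lam M) (fun k _ => (exp_pos _).le) (fun k _ => ha k),
    weightedGeomMean_c M hlam]
  ring

lemma R_nonneg (hlam : ∀ n, 0 < lam n) (ha : ∀ n, 0 ≤ a n) (n : ℕ) : 0 ≤ R lam M a n :=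
  mul_nonneg (sum_nonneg fun i _ => (hlam i).le)
    (weightedGeomMean_nonneg fun k _ => mul_nonneg (exp_pos _).le (ha k))

lemma R_succ_le (hlam : ∀ n, 0 < lam n) (ha : ∀ n, 0 ≤ a n) (n : ℕ) :
    R lam M a (n + 1) ≤ R lam M a n + lam (n + 1) * (c lam M (n + 1) * a (n + 1)) := by
  have h := sum_mul_weightedGeomMean_insert_le (w := lam) (x := fun k => c lam M k * a k)
    (s := Icc 1 n) (i := n + 1) (by simp) (fun k _ => hlam k)
    (fun k _ => mul_nonneg (exp_pos _).le (ha k))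
  rwa [insert_Icc_right_eq_Icc_add_one (by omega)] at h

lemma T_mul_c (hlam : ∀ n, 0 < lam n) (n : ℕ) :
    T lam M n * (lam n * (c lam M n * a n)) = exp M * a n := by
  rw [T, c, div_mul_eq_mul_div, mul_div_assoc, mul_div_cancel_left₀ _ (hlam n).ne',
    ← mul_assoc, ← exp_add]
  ring_nf

lemma sub_T_mul_R (hlam : ∀ n, 0 < lam n) (ha : ∀ n, 0 ≤ a n) {n : ℕ} (hn : n ≠ 0) :
    (T lam M n - T lam M (n + 1)) * R lam M a n =
      Lam lam n * (exp (M * lam n / Lam lam n) / lam n - 1 / lam (n + 1)) *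
        weightedGeomMean lam a (Icc 1 n) := by
  obtain ⟨m, rfl⟩ := Nat.exists_eq_succ_of_ne_zero hn
  rw [R_eq M a hlam ha, T, T, Nat.add_sub_cancel, Nat.succ_sub_one, P_succ,
    mul_add, mul_div_assoc, exp_neg, exp_neg, exp_add]
  have := (hlam (m + 1)).ne'
  have := (hlam (m + 1 + 1)).ne'
  field_simp

end WeightedCarleman

open WeightedCarleman in
theorem ineq_5_2'_general (M : ℝ)
    (lam Lam a G : ℕ → ℝ) (hlam : ∀ n, 0 < lam n)
    (hLam : ∀ n, Lam n = ∑ i ∈ Finset.Icc 1 n, lam i)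
    (ha : ∀ n, 0 ≤ a n)
    (hG : ∀ n, G n = ∏ k ∈ Finset.Icc 1 n, a k ^ (lam k / Lam n))
    (N : ℕ) :
    ∑ n ∈ Finset.Icc 1 N,
        Lam n * (Real.exp (M * lam n / Lam n) / lam n - 1 / lam (n + 1)) * G n ≤
      Real.exp M * ∑ n ∈ Finset.Icc 1 N, a n := by
  obtain rfl : Lam = WeightedCarleman.Lam lam := funext hLam
  calc _ = ∑ n ∈ Icc 1 N, (T lam M n - T lam M (n + 1)) * R lam M a n :=
        sum_congr rfl fun n hn => by
          rw [hG, sub_T_mul_R M a hlam ha (by simp at hn; omega)]; rfl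
    _ ≤ ∑ n ∈ Icc 1 N, T lam M n * (lam n * (c lam M n * a n)) :=
        (le_add_of_nonneg_right (mul_nonneg (T_pos M hlam _).le (R_nonneg M a hlam ha N))).trans
          (sum_Icc_sub_mul_add_le_sum_mul (by simp [R]) (fun n => (T_pos M hlam _).le)
            (R_succ_le M a hlam ha) N)
    _ = exp M * ∑ n ∈ Icc 1 N, a n := by
      rw [mul_sum]; exact sum_congr rfl fun n _ => T_mul_c M a hlam n

/-- Inequality (5.2') of the paper. -/
theorem ineq_5_2' (M : ℝ) (hM : 0 < M)
    (lam Lam a G : ℕ → ℝ) (hlam : ∀ n, 0 < lam n)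
    (hLam : ∀ n, Lam n = ∑ i ∈ Finset.Icc 1 n, lam i)
    (ha : ∀ n, 0 ≤ a n)
    (hG : ∀ n, G n = ∏ k ∈ Finset.Icc 1 n, a k ^ (lam k / Lam n))
    (N : ℕ) (hN : 1 ≤ N) :
    ∑ n ∈ Finset.Icc 1 N,
        Lam n * (Real.exp (M * lam n / Lam n) / lam n - 1 / lam (n + 1)) * G n ≤
      Real.exp M * ∑ n ∈ Finset.Icc 1 N, a n :=
  ineq_5_2'_general M lam Lam a G hlam hLam ha hG N
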